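/- arXiv:1611.01506 — 3 statements merged into one kernel-verified Lean document; each statement's English description precedes it below -/
import Mathlib

section
/- Let $k$ be an $m$-orthogonal kernel supported on $[-1,1]$ with $\int_{-1}^1 k = 1$, and let $h$ be $m$ times continuously differentiable at a fixed point $x$ with continuous $m$-th derivative. If $b_n > 0$ with $b_n \to 0$, then $b_n^{-m}\left(\int_{-1}^1 k(y) h(x - b_n y)\,dy - h(x)\right) \to \frac{(-1)^m}{m!} h^{(m)}(x) \int_{-1}^1 k(y) y^m\,dy$ as $n \to \infty$. -/
/-!
Expand `h (x - s * y)` by Taylor's formula of order `m` at `x`. Integrated against `k`, the Taylor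
polynomial only sees the moments of `k`: orthogonality kills the terms of degree `1, …, m - 1`,
leaving `h x` and the term of degree `m`. The Taylor remainder is `o(s ^ m)` uniformly in
`y ∈ [-1, 1]`, so, `k` being bounded, so is its integral against `k`.
-/

open MeasureTheory Filter Asymptotics Finset Set intervalIntegral Topology Interval

section Kernel

variable {k : ℝ → ℝ} {K : ℝ}

lemma intervalIntegrable_mul_of_abs_le (hkm : Measurable k) (hbdd : ∀ y, |k y| ≤ K)
    {g : ℝ → ℝ} (hg : Continuous g) (a b : ℝ) :
    IntervalIntegrable (fun y => k y * g y) volume a b :=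
  ((intervalIntegrable_const (c := K)).mono_fun hkm.aestronglyMeasurable
    (Eventually.of_forall fun y => (hbdd y).trans (le_abs_self K))).mul_continuousOn
    hg.continuousOn

lemma integral_mul_sum_pow {a b : ℝ}
    (hk : ∀ j, IntervalIntegrable (fun y => k y * y ^ j) volume a b) (c : ℕ → ℝ) (s : ℝ) (n : ℕ) :
    ∫ y in a..b, k y * ∑ j ∈ range n, c j * (s * y) ^ j =
      ∑ j ∈ range n, c j * s ^ j * ∫ y in a..b, k y * y ^ j := by
  have hterm : ∀ y, k y * ∑ j ∈ range n, c j * (s * y) ^ j =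
      ∑ j ∈ range n, c j * s ^ j * (k y * y ^ j) := fun y => by
    rw [mul_sum]; exact sum_congr rfl fun j _ => by ring
  simp_rw [hterm]
  rw [integral_finsetSum fun j _ => (hk j).const_mul _]
  simp only [intervalIntegral.integral_const_mul]

lemma sum_mul_moment_of_orthogonal {a b : ℝ} {m : ℕ} (hm : 1 ≤ m)
    (hint : ∫ y in a..b, k y = 1)
    (horth : ∀ j, 1 ≤ j → j < m → ∫ y in a..b, k y * y ^ j = 0) (c : ℕ → ℝ) (s : ℝ) :
    ∑ j ∈ range (m + 1), c j * s ^ j * ∫ y in a..b, k y * y ^ j =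
      c 0 + c m * s ^ m * ∫ y in a..b, k y * y ^ m := by
  rw [sum_range_succ, sum_eq_single_of_mem 0 (mem_range.2 hm)]
  · simp [hint]
  · intro j hj hj0
    rw [horth j (Nat.one_le_iff_ne_zero.2 hj0) (mem_range.1 hj), mul_zero]

lemma integral_mul_comp_sub_isLittleO {g : ℝ → ℝ} {x : ℝ} {m : ℕ} (hbdd : ∀ y, |k y| ≤ K)
    (hg : g =o[𝓝 x] fun u => (u - x) ^ m) :
    (fun s => ∫ y in (-1:ℝ)..1, k y * g (x - s * y)) =o[𝓝 0] fun s => s ^ m := by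
  have hK : 0 ≤ K := (abs_nonneg _).trans (hbdd 0)
  refine IsLittleO.of_bound fun c hc => ?_
  obtain ⟨δ, hδ, hgδ⟩ :=
    Metric.eventually_nhds_iff.1 (hg.def (by positivity : 0 < c / (2 * K + 1)))
  filter_upwards [Metric.ball_mem_nhds 0 hδ] with s hs
  rw [Metric.mem_ball, _root_.dist_zero_right] at hs
  have hpoint : ∀ y ∈ Ι (-1:ℝ) 1, ‖k y * g (x - s * y)‖ ≤ K * (c / (2 * K + 1) * ‖s ^ m‖) := by
    intro y hy
    rw [uIoc_of_le (by norm_num)] at hy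
    have hy1 : |y| ≤ 1 := abs_le.2 ⟨hy.1.le, hy.2⟩
    have hsy : ‖x - s * y - x‖ ≤ ‖s‖ := by
      rw [sub_sub_cancel_left, norm_neg, norm_mul]
      exact mul_le_of_le_one_right (norm_nonneg s) hy1
    have hdist : dist (x - s * y) x < δ := by rw [dist_eq_norm]; exact hsy.trans_lt hs
    rw [norm_mul]
    gcongr
    · exact hbdd y
    · refine (hgδ hdist).trans ?_
      rw [norm_pow, norm_pow]
      gcongr
  calc ‖∫ y in (-1:ℝ)..1, k y * g (x - s * y)‖
      ≤ K * (c / (2 * K + 1) * ‖s ^ m‖) * |1 - (-1:ℝ)| := norm_integral_le_of_norm_le_const hpoint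
    _ = 2 * K / (2 * K + 1) * c * ‖s ^ m‖ := by norm_num; ring
    _ ≤ 1 * c * ‖s ^ m‖ := by gcongr; exact (div_le_one (by positivity)).2 (by linarith)
    _ = c * ‖s ^ m‖ := by rw [one_mul]

end Kernel

lemma taylorWithinEval_univ_eq_sum (f : ℝ → ℝ) (n : ℕ) (x₀ u : ℝ) :
    taylorWithinEval f n univ x₀ u =
      ∑ j ∈ range (n + 1), iteratedDeriv j f x₀ / j.factorial * (u - x₀) ^ j := by
  rw [taylor_within_apply]
  refine sum_congr rfl fun j _ => ?_
  rw [iteratedDerivWithin_univ, smul_eq_mul]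
  ring

theorem integral_mul_comp_sub_eq_taylor {k h : ℝ → ℝ} {K : ℝ} {m : ℕ} (hm : 1 ≤ m)
    (hkm : Measurable k) (hbdd : ∀ y, |k y| ≤ K) (hint : ∫ y in (-1:ℝ)..1, k y = 1)
    (horth : ∀ j, 1 ≤ j → j < m → ∫ y in (-1:ℝ)..1, k y * y ^ j = 0)
    (hh : ContDiff ℝ m h) (x s : ℝ) :
    ∫ y in (-1:ℝ)..1, k y * h (x - s * y) =
      h x + iteratedDeriv m h x / m.factorial * (-s) ^ m * (∫ y in (-1:ℝ)..1, k y * y ^ m) +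
        ∫ y in (-1:ℝ)..1, k y * (h (x - s * y) - taylorWithinEval h m univ x (x - s * y)) := by
  set c : ℕ → ℝ := fun j => iteratedDeriv j h x / j.factorial
  have htaylor : ∀ y, taylorWithinEval h m univ x (x - s * y) =
      ∑ j ∈ range (m + 1), c j * (-s * y) ^ j := fun y => by
    rw [taylorWithinEval_univ_eq_sum, sub_sub_cancel_left, neg_mul]
  have hpoly : ∫ y in (-1:ℝ)..1, k y * taylorWithinEval h m univ x (x - s * y) =
      h x + c m * (-s) ^ m * ∫ y in (-1:ℝ)..1, k y * y ^ m := by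
    simp_rw [htaylor]
    rw [integral_mul_sum_pow (fun j => intervalIntegrable_mul_of_abs_le hkm hbdd
      (continuous_pow j) _ _), sum_mul_moment_of_orthogonal hm hint horth]
    simp [c]
  have hint_h : IntervalIntegrable (fun y => k y * h (x - s * y)) volume (-1) 1 :=
    intervalIntegrable_mul_of_abs_le hkm hbdd (by fun_prop) _ _
  have hint_T : IntervalIntegrable (fun y => k y * taylorWithinEval h m univ x (x - s * y))
      volume (-1) 1 := by
    simp_rw [htaylor]
    exact intervalIntegrable_mul_of_abs_le hkm hbdd (by fun_prop) _ _
  simp_rw [mul_sub]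
  rw [integral_sub hint_h hint_T, hpoly]
  ring

theorem stmt1_general (m : ℕ) (hm : 1 ≤ m) (k h : ℝ → ℝ) (x K : ℝ)
    (hkm : Measurable k)
    (hbdd : ∀ y, |k y| ≤ K)
    (hint : ∫ y in (-1:ℝ)..1, k y = 1)
    (horth : ∀ j, 1 ≤ j → j < m → ∫ y in (-1:ℝ)..1, k y * y ^ j = 0)
    (hh : ContDiff ℝ m h)
    (b : ℕ → ℝ) (hbpos : ∀ n, 0 < b n) (hb0 : Tendsto b atTop (nhds 0)) :
    Tendsto (fun n => ((∫ y in (-1:ℝ)..1, k y * h (x - b n * y)) - h x) / (b n) ^ m)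
      atTop
      (nhds ((-1:ℝ) ^ m / m.factorial * iteratedDeriv m h x *
        ∫ y in (-1:ℝ)..1, k y * y ^ m)) := by
  set R : ℝ → ℝ := fun s =>
    ∫ y in (-1:ℝ)..1, k y * (h (x - s * y) - taylorWithinEval h m univ x (x - s * y))
  have hR : Tendsto (fun n => R (b n) / b n ^ m) atTop (𝓝 0) :=
    ((integral_mul_comp_sub_isLittleO hbdd (taylor_isLittleO_univ hh)).comp_tendsto
      hb0).tendsto_div_nhds_zero
  have hsplit : ∀ n, ((∫ y in (-1:ℝ)..1, k y * h (x - b n * y)) - h x) / b n ^ m =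
      (-1:ℝ) ^ m / m.factorial * iteratedDeriv m h x * (∫ y in (-1:ℝ)..1, k y * y ^ m) +
        R (b n) / b n ^ m := fun n => by
    rw [integral_mul_comp_sub_eq_taylor hm hkm hbdd hint horth hh, neg_pow]
    field_simp [(hbpos n).ne']
    ring
  simpa only [hsplit, add_zero] using tendsto_const_nhds.add hR

theorem stmt1 (m : ℕ) (hm : 1 ≤ m) (k h : ℝ → ℝ) (x K : ℝ)
    (hkm : Measurable k)
    (hsupp : ∀ y, y ∉ Set.Icc (-1:ℝ) 1 → k y = 0)
    (hbdd : ∀ y, |k y| ≤ K)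
    (hint : ∫ y in (-1:ℝ)..1, k y = 1)
    (horth : ∀ j, 1 ≤ j → j < m → ∫ y in (-1:ℝ)..1, k y * y ^ j = 0)
    (hh : ContDiff ℝ m h)
    (b : ℕ → ℝ) (hbpos : ∀ n, 0 < b n) (hb0 : Tendsto b atTop (nhds 0)) :
    Tendsto (fun n => ((∫ y in (-1:ℝ)..1, k y * h (x - b n * y)) - h x) / (b n) ^ m)
      atTop
      (nhds ((-1:ℝ) ^ m / m.factorial * iteratedDeriv m h x *
        ∫ y in (-1:ℝ)..1, k y * y ^ m)) :=
  stmt1_general m hm k h x K hkm hbdd hint horth hh b hbpos hb0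
end

section
/- Let $\lambda_0 : [0, \tau] \to \mathbb{R}$ be continuous and strictly increasing, let $X_0 : [0, \tau] \to \mathbb{R}$ be absolutely continuous with derivative $x_0$ that is nonincreasing and strictly positive, and let $Y_0(t) = \int_0^t \lambda_0(u)\,dX_0(u) = \int_0^t \lambda_0(u) x_0(u)\,du$. Then for any $0 < \eta_1 < \ell \le \tau$ and any $t \in [0, \ell - \eta_1]$: $Y_0(t) - Y_0(\ell) - \lambda_0(\ell)(X_0(t) - X_0(\ell)) \ge x_0(\ell) \int_{\ell - \eta_1}^{\ell} (\lambda_0(\ell) - \lambda_0(u))\,du > 0$. -/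
open MeasureTheory

theorem stmt6 (τ l η₁ : ℝ) (lam₀ x₀ X₀ Y₀ : ℝ → ℝ)
    (hτ : 0 < τ)
    (hcont : ContinuousOn lam₀ (Set.Icc 0 τ))
    (hmono : StrictMonoOn lam₀ (Set.Icc 0 τ))
    (hx₀pos : ∀ u ∈ Set.Icc (0:ℝ) τ, 0 < x₀ u)
    (hx₀anti : AntitoneOn x₀ (Set.Icc 0 τ))
    (hx₀int : IntervalIntegrable x₀ volume 0 τ)
    (hprodint : IntervalIntegrable (fun u => lam₀ u * x₀ u) volume 0 τ)
    (hX₀ : ∀ t ∈ Set.Icc (0:ℝ) τ, X₀ t = ∫ u in (0:ℝ)..t, x₀ u)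
    (hY₀ : ∀ t ∈ Set.Icc (0:ℝ) τ, Y₀ t = ∫ u in (0:ℝ)..t, lam₀ u * x₀ u)
    (hη₁ : 0 < η₁) (hη₁l : η₁ < l) (hlτ : l ≤ τ) :
    ∀ t ∈ Set.Icc (0:ℝ) (l - η₁),
      Y₀ t - Y₀ l - lam₀ l * (X₀ t - X₀ l) ≥
        x₀ l * ∫ u in (l - η₁)..l, (lam₀ l - lam₀ u) ∧
      0 < x₀ l * ∫ u in (l - η₁)..l, (lam₀ l - lam₀ u) := by
  intro t ht
  obtain ⟨ht0, htl⟩ := ht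
  have hl0 : (0:ℝ) < l := hη₁.trans hη₁l
  have hlmem : l ∈ Set.Icc (0:ℝ) τ := ⟨hl0.le, hlτ⟩
  have htτ : t ≤ τ := htl.trans (by linarith)
  have htmem : t ∈ Set.Icc (0:ℝ) τ := ⟨ht0, htτ⟩
  have htl' : t ≤ l := htl.trans (by linarith)
  have hsub : ∀ a b : ℝ, 0 ≤ a → a ≤ b → b ≤ τ → Set.uIcc a b ⊆ Set.uIcc (0:ℝ) τ := by
    intro a b ha hab hb
    rw [Set.uIcc_of_le hab, Set.uIcc_of_le hτ.le]
    exact Set.Icc_subset_Icc ha hb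
  have hx₀int' : IntervalIntegrable x₀ volume t l :=
    hx₀int.mono_set (hsub t l ht0 htl' hlτ)
  have hprodint' : IntervalIntegrable (fun u => lam₀ u * x₀ u) volume t l :=
    hprodint.mono_set (hsub t l ht0 htl' hlτ)
  have hcont' : ∀ a b : ℝ, 0 ≤ a → a ≤ b → b ≤ τ →
      IntervalIntegrable lam₀ volume a b := by
    intro a b ha hab hb
    apply ContinuousOn.intervalIntegrable
    apply hcont.mono
    rw [Set.uIcc_of_le hab]
    exact Set.Icc_subset_Icc ha hb
  rw [hY₀ t htmem, hY₀ l hlmem, hX₀ t htmem, hX₀ l hlmem]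
  have hYdiff : (∫ u in (0:ℝ)..t, lam₀ u * x₀ u) - ∫ u in (0:ℝ)..l, lam₀ u * x₀ u
      = -∫ u in t..l, lam₀ u * x₀ u := by
    rw [← intervalIntegral.integral_add_adjacent_intervals
      (hprodint.mono_set (hsub 0 t le_rfl ht0 htτ)) hprodint']
    ring
  have hXdiff : (∫ u in (0:ℝ)..t, x₀ u) - ∫ u in (0:ℝ)..l, x₀ u
      = -∫ u in t..l, x₀ u := by
    rw [← intervalIntegral.integral_add_adjacent_intervals
      (hx₀int.mono_set (hsub 0 t le_rfl ht0 htτ)) hx₀int']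
    ring
  rw [hYdiff, hXdiff]
  have hfun : (fun u => (lam₀ l - lam₀ u) * x₀ u)
      = fun u => lam₀ l * x₀ u - lam₀ u * x₀ u := by funext u; ring
  have hgint : IntervalIntegrable (fun u => (lam₀ l - lam₀ u) * x₀ u) volume t l := by
    rw [hfun]; exact (hx₀int'.const_mul _).sub hprodint'
  have key : -(∫ u in t..l, lam₀ u * x₀ u) - lam₀ l * (-∫ u in t..l, x₀ u)
      = ∫ u in t..l, (lam₀ l - lam₀ u) * x₀ u := by
    rw [hfun, intervalIntegral.integral_sub (hx₀int'.const_mul _) hprodint',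
      intervalIntegral.integral_const_mul]
    ring
  rw [key]
  have hlamle : ∀ u ∈ Set.Icc (0:ℝ) l, lam₀ u ≤ lam₀ l := fun u hu =>
    (hmono.monotoneOn) ⟨hu.1, hu.2.trans hlτ⟩ hlmem hu.2
  have hhint : ∀ a b : ℝ, 0 ≤ a → a ≤ b → b ≤ τ →
      IntervalIntegrable (fun u => (lam₀ l - lam₀ u) * x₀ l) volume a b := by
    intro a b ha hab hb
    exact (intervalIntegrable_const.sub (hcont' a b ha hab hb)).mul_const (x₀ l)
  -- the positivity part
  have hpos : 0 < x₀ l * ∫ u in (l - η₁)..l, (lam₀ l - lam₀ u) := by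
    apply mul_pos (hx₀pos l hlmem)
    apply intervalIntegral.intervalIntegral_pos_of_pos_on
    · exact intervalIntegrable_const.sub (hcont' (l-η₁) l (by linarith) (by linarith) hlτ)
    · intro u hu
      have hu' : u ∈ Set.Icc (0:ℝ) τ := ⟨by linarith [hu.1], (hu.2.le).trans hlτ⟩
      have := hmono hu' hlmem hu.2
      linarith
    · linarith
  refine ⟨?_, hpos⟩
  -- step A : pointwise comparison on [t, l]
  have stepA : (∫ u in t..l, (lam₀ l - lam₀ u) * x₀ u)
      ≥ ∫ u in t..l, (lam₀ l - lam₀ u) * x₀ l := by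
    apply intervalIntegral.integral_mono_on htl' (hhint t l ht0 htl' hlτ) hgint
    intro u hu
    have hu0 : u ∈ Set.Icc (0:ℝ) τ := ⟨ht0.trans hu.1, hu.2.trans hlτ⟩
    have h1 : lam₀ u ≤ lam₀ l := hlamle u ⟨ht0.trans hu.1, hu.2⟩
    have h2 : x₀ l ≤ x₀ u := hx₀anti hu0 hlmem hu.2
    have h3 : 0 < x₀ l := hx₀pos l hlmem
    nlinarith
  -- step B : shrink the interval
  have stepB : (∫ u in t..l, (lam₀ l - lam₀ u) * x₀ l)
      ≥ ∫ u in (l - η₁)..l, (lam₀ l - lam₀ u) * x₀ l := by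
    have hsplit : (∫ u in t..(l-η₁), (lam₀ l - lam₀ u) * x₀ l)
        + ∫ u in (l-η₁)..l, (lam₀ l - lam₀ u) * x₀ l
        = ∫ u in t..l, (lam₀ l - lam₀ u) * x₀ l :=
      intervalIntegral.integral_add_adjacent_intervals
        (hhint t (l-η₁) ht0 htl (by linarith)) (hhint (l-η₁) l (by linarith) (by linarith) hlτ)
    have hnn : 0 ≤ ∫ u in t..(l-η₁), (lam₀ l - lam₀ u) * x₀ l := by
      apply intervalIntegral.integral_nonneg htl
      intro u hu
      have h1 : lam₀ u ≤ lam₀ l := hlamle u ⟨ht0.trans hu.1, by linarith [hu.2]⟩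
      have h3 : 0 < x₀ l := hx₀pos l hlmem
      nlinarith
    linarith
  have stepC : (∫ u in (l - η₁)..l, (lam₀ l - lam₀ u) * x₀ l)
      = x₀ l * ∫ u in (l - η₁)..l, (lam₀ l - lam₀ u) := by
    rw [← intervalIntegral.integral_const_mul]
    congr 1; funext u; ring
  rw [stepC] at stepB
  linarith [stepA, stepB]
end

section
/- Let $f : [0,\tau] \to \mathbb{R}$ be continuous, let $w : [0,\tau] \to (0,\infty)$ be continuous, and let $\hat\lambda$ denote the minimizer over nondecreasing functions of $\int_0^\tau (\lambda - f)^2 w\,dx$ (the weighted isotonic projection of $f$). If $f$ is nondecreasing on a subinterval $[\ell, M] \subset [0, \tau]$ and there exist tangent-line extensions of $\int_0^\cdot f\,dW$ (where $W(t) = \int_0^t w$) at $\ell$ and $M$ that lie below the graph of $t \mapsto \int_0^t f\,dW$ on $[0,\ell]$ and $[M, \tau]$ respectively, then $\hat\lambda = f$ on $[\ell, M]$. -/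
/-
The competitor is the splice `g` of `lamh`: capped by `f l` left of `l`, equal to `f` on
`(l, M]`, floored by `f M` right of `M`. It is nondecreasing, so minimality of `lamh` along the
segment from `lamh` to `g` gives the first-order condition `∫ (lamh - f) (g - lamh) w ≥ 0`.
On `(l, M]` the integrand is `-(lamh - f)² w`. Left of `l` it is at most `-ψ (f l - f) w` with
`ψ = (lamh - f l)⁺` nondecreasing; the tangent condition at `l` says that every tail integral
of `(f l - f) w` over `[t, l]` is nonnegative, and by the layer-cake formula for `ψ` this makes
`∫ ψ (f l - f) w` nonnegative. The right of `M` is symmetric. Hence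
`∫_l^M (lamh - f)² w ≤ 0`, and `w > 0` forces `lamh = f` a.e. on `[l, M]`.
-/

open MeasureTheory Set Filter Topology
open scoped ENNReal

theorem ContinuousOn.memLp_top_of_isCompact {f : ℝ → ℝ} {s : Set ℝ} {μ : Measure ℝ}
    (hs : IsCompact s) (hf : ContinuousOn f s) : MemLp f ∞ (μ.restrict s) := by
  obtain ⟨C, hC⟩ := hs.exists_bound_of_continuousOn hf
  exact memLp_top_of_bound (hf.aestronglyMeasurable hs.measurableSet) C
    ((ae_restrict_iff' hs.measurableSet).2 (ae_of_all _ hC))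

theorem MeasureTheory.MemLp.intervalIntegrable_of_mem_Icc {φ : ℝ → ℝ} {a b s t : ℝ}
    (hφ : MemLp φ ∞ (volume.restrict (Icc a b))) (hs : s ∈ Icc a b) (ht : t ∈ Icc a b) :
    IntervalIntegrable φ volume s t :=
  (IntegrableOn.mono_set (hφ.integrable le_top) (uIcc_subset_Icc hs ht)).intervalIntegrable

section Bounded

variable {φ g f w : ℝ → ℝ} {μ : Measure ℝ}

theorem MeasureTheory.MemLp.sub_mul_sub_mul (hφ : MemLp φ ∞ μ) (hg : MemLp g ∞ μ)
    (hf : MemLp f ∞ μ) (hw : MemLp w ∞ μ) : MemLp (fun t => (φ t - f t) * (g t - φ t) * w t) ∞ μ :=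
  hw.mul' (r := ∞) ((hg.sub hφ).mul' (r := ∞) (hφ.sub hf))

theorem MeasureTheory.MemLp.sub_sq_mul (hφ : MemLp φ ∞ μ) (hf : MemLp f ∞ μ) (hw : MemLp w ∞ μ) :
    MemLp (fun t => (φ t - f t) ^ 2 * w t) ∞ μ := by
  simpa only [sq, Pi.sub_apply] using hw.mul' (r := ∞) ((hφ.sub hf).mul' (r := ∞) (hφ.sub hf))

end Bounded

theorem setIntegral_inter_Ioc_nonneg_of_isUpperSet {α β : ℝ} {ρ : ℝ → ℝ} {U : Set ℝ}
    (hU : IsUpperSet U) (htail : ∀ t ∈ Icc α β, 0 ≤ ∫ u in t..β, ρ u) :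
    0 ≤ ∫ u in U ∩ Ioc α β, ρ u := by
  rcases (U ∩ Icc α β).eq_empty_or_nonempty with hempty | hne
  · have : U ∩ Ioc α β = ∅ :=
      subset_empty_iff.1 <| hempty ▸ inter_subset_inter_right U Ioc_subset_Icc_self
    simp [this]
  set a₀ := sInf (U ∩ Icc α β)
  have hbdd : BddBelow (U ∩ Icc α β) := ⟨α, fun x hx => hx.2.1⟩
  have ha₀ : a₀ ∈ Icc α β := ⟨le_csInf hne fun x hx => hx.2.1,
    (csInf_le hbdd hne.some_mem).trans hne.some_mem.2.2⟩
  have hupper : Ioc a₀ β ⊆ U ∩ Ioc α β := fun u hu => by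
    obtain ⟨x, hx, hxu⟩ := exists_lt_of_csInf_lt hne hu.1
    exact ⟨hU hxu.le hx.1, ha₀.1.trans_lt hu.1, hu.2⟩
  have hlower : U ∩ Ioc α β ⊆ Icc a₀ β := fun u hu =>
    ⟨csInf_le hbdd ⟨hu.1, Ioc_subset_Icc_self hu.2⟩, hu.2.2⟩
  have hae : (U ∩ Ioc α β : Set ℝ) =ᵐ[volume] (Ioc a₀ β : Set ℝ) :=
    (hlower.eventuallyLE.trans (Ioc_ae_eq_Icc (μ := volume) (a := a₀) (b := β)).symm.le).antisymm
      hupper.eventuallyLE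
  rw [setIntegral_congr_set hae, ← intervalIntegral.integral_of_le ha₀.2]
  exact htail a₀ ha₀

theorem integral_mul_nonneg_of_monotone {α β : ℝ} {ρ ψ : ℝ → ℝ} (hαβ : α ≤ β)
    (hρ : IntervalIntegrable ρ volume α β) (hψ : Monotone ψ) (hψ0 : ∀ t, 0 ≤ ψ t)
    (htail : ∀ t ∈ Icc α β, 0 ≤ ∫ u in t..β, ρ u) :
    0 ≤ ∫ u in α..β, ψ u * ρ u := by
  rw [intervalIntegral.integral_of_le hαβ]
  set μ := volume.restrict (Ioc α β)
  set ν := volume.restrict (Ico 0 (ψ β))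
  set G : ℝ → ℝ → ℝ := fun u s => (Iio (ψ u)).indicator (fun _ => ρ u) s
  have hG : Integrable (Function.uncurry G) (μ.prod ν) := by
    have hρ' : Integrable ρ μ := (intervalIntegrable_iff_integrableOn_Ioc_of_le hαβ).1 hρ
    refine (hρ'.norm.mul_prod (integrable_const (1 : ℝ))).mono' ?_ ?_
    · exact (hρ'.aestronglyMeasurable.comp_fst).indicator
        (measurableSet_lt measurable_snd (hψ.measurable.comp measurable_fst))
    · filter_upwards with p
      simp only [Function.uncurry, G, indicator_apply, mul_one]
      split_ifs <;> simp
  have hinner : ∀ u ∈ Ioc α β, ∫ s, G u s ∂ν = ψ u * ρ u := fun u hu => by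
    rw [integral_indicator_const _ measurableSet_Iio, measureReal_restrict_apply measurableSet_Iio,
      inter_comm, Ico_inter_Iio, Real.volume_real_Ico, min_eq_right (hψ hu.2)]
    simp [hψ0 u]
  -- Layer cake: `ψ u` is the length of `[0, ψ u)`. After Fubini, each slice integrates `ρ`
  -- over an upper level set of `ψ`, which is a tail of `(α, β]` up to a null set.
  calc (0 : ℝ) ≤ ∫ s, ∫ u, G u s ∂μ ∂ν := integral_nonneg fun s => by
        have hU : IsUpperSet {u | s < ψ u} := fun a b hab ha => ha.trans_le (hψ hab)
        have hGs : (fun u => G u s) = {u | s < ψ u}.indicator ρ := by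
          ext u; simp [G, indicator_apply]
        have hmeas : MeasurableSet {u | s < ψ u} := measurableSet_lt measurable_const hψ.measurable
        simp only [Pi.zero_apply]
        rw [hGs, integral_indicator hmeas, Measure.restrict_restrict hmeas]
        exact setIntegral_inter_Ioc_nonneg_of_isUpperSet hU htail
    _ = ∫ u in Ioc α β, ψ u * ρ u := by
      rw [← integral_integral_swap hG]
      exact setIntegral_congr_fun measurableSet_Ioc hinner

theorem integral_mul_nonneg_of_monotoneOn {α β : ℝ} {ρ ψ : ℝ → ℝ} (hαβ : α ≤ β)
    (hρ : IntervalIntegrable ρ volume α β) (hψ : MonotoneOn ψ (Icc α β))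
    (hψ0 : ∀ t ∈ Icc α β, 0 ≤ ψ t) (htail : ∀ t ∈ Icc α β, 0 ≤ ∫ u in t..β, ρ u) :
    0 ≤ ∫ u in α..β, ψ u * ρ u := by
  set ψ' := IccExtend hαβ fun x : Icc α β => ψ x
  have hψ' : Monotone ψ' := (monotoneOn_iff_monotone.1 hψ).IccExtend hαβ
  rw [intervalIntegral.integral_congr (g := fun u => ψ' u * ρ u) fun u hu => by
    rw [uIcc_of_le hαβ] at hu; simp [ψ', IccExtend_of_mem _ _ hu]]
  exact integral_mul_nonneg_of_monotone hαβ hρ hψ' (fun t => hψ0 _ (projIcc α β hαβ t).2) htail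

theorem integral_mul_nonneg_of_antitoneOn {α β : ℝ} {ρ ψ : ℝ → ℝ} (hαβ : α ≤ β)
    (hρ : IntervalIntegrable ρ volume α β) (hψ : AntitoneOn ψ (Icc α β))
    (hψ0 : ∀ t ∈ Icc α β, 0 ≤ ψ t) (hhead : ∀ t ∈ Icc α β, 0 ≤ ∫ u in α..t, ρ u) :
    0 ≤ ∫ u in α..β, ψ u * ρ u := by
  have hrefl : ∀ t ∈ Icc α β, α + β - t ∈ Icc α β := fun t ht =>
    ⟨by linarith [ht.2], by linarith [ht.1]⟩
  have h := integral_mul_nonneg_of_monotoneOn (ρ := fun u => ρ (α + β - u))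
    (ψ := fun u => ψ (α + β - u)) hαβ
    (by simpa using (hρ.comp_sub_left (α + β)).symm)
    (fun a ha b hb hab => hψ (hrefl b hb) (hrefl a ha) (by linarith))
    (fun t ht => hψ0 _ (hrefl t ht))
    (fun t ht => by
      rw [intervalIntegral.integral_comp_sub_left]
      simpa using hhead _ (hrefl t ht))
  rwa [intervalIntegral.integral_comp_sub_left (fun u => ψ u * ρ u), add_sub_cancel_right,
    add_sub_cancel_left] at h

theorem integral_sub_mul_nonneg_of_tangent_le {f w : ℝ → ℝ} {a b p t : ℝ}
    (hf : ContinuousOn f (Icc a b)) (hw : ContinuousOn w (Icc a b))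
    (hp : p ∈ Icc a b) (ht : t ∈ Icc a b)
    (htan : (∫ u in a..p, f u * w u) + ((∫ u in a..t, w u) - ∫ u in a..p, w u) * f p ≤
      ∫ u in a..t, f u * w u) :
    0 ≤ ∫ u in p..t, (f u - f p) * w u := by
  have ha : a ∈ Icc a b := ⟨le_rfl, hp.1.trans hp.2⟩
  have hW : ∀ s ∈ Icc a b, ∀ s' ∈ Icc a b, IntervalIntegrable w volume s s' :=
    fun s hs s' hs' => (hw.mono (uIcc_subset_Icc hs hs')).intervalIntegrable
  have hFW : ∀ s ∈ Icc a b, ∀ s' ∈ Icc a b, IntervalIntegrable (fun u => f u * w u) volume s s' :=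
    fun s hs s' hs' => ((hf.mul hw).mono (uIcc_subset_Icc hs hs')).intervalIntegrable
  have hsplit : ∫ u in p..t, (f u - f p) * w u =
      (∫ u in p..t, f u * w u) - f p * ∫ u in p..t, w u := by
    rw [← intervalIntegral.integral_const_mul,
      ← intervalIntegral.integral_sub (hFW p hp t ht) ((hW p hp t ht).const_mul _)]
    exact intervalIntegral.integral_congr fun u _ => by ring
  rw [hsplit, ← intervalIntegral.integral_interval_sub_left (hFW a ha t ht) (hFW a ha p hp),
    ← intervalIntegral.integral_interval_sub_left (hW a ha t ht) (hW a ha p hp)]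
  linarith

noncomputable def splice (lam f : ℝ → ℝ) (l M : ℝ) (t : ℝ) : ℝ :=
  if t ≤ l then min (lam t) (f l) else if t ≤ M then f t else max (lam t) (f M)

theorem monotoneOn_splice {lam f : ℝ → ℝ} {a b l M : ℝ} (hlam : MonotoneOn lam (Icc a b))
    (hf : MonotoneOn f (Icc l M)) (hlM : l ≤ M) : MonotoneOn (splice lam f l M) (Icc a b) := by
  intro s hs t ht hst
  have hf' : ∀ ⦃u v⦄, l ≤ u → u ≤ v → v ≤ M → f u ≤ f v := fun u v hu huv hv =>
    hf ⟨hu, huv.trans hv⟩ ⟨hu.trans huv, hv⟩ huv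
  unfold splice
  split_ifs <;> first
    | exact min_le_min_right _ (hlam hs ht hst)
    | exact max_le_max_right _ (hlam hs ht hst)
    | exact hf' (by linarith) hst (by linarith)
    | exact (min_le_right _ _).trans (hf' le_rfl (by linarith) (by linarith))
    | exact (min_le_right _ _).trans ((hf' le_rfl hlM le_rfl).trans (le_max_right _ _))
    | exact (hf' (by linarith) (by linarith) le_rfl).trans (le_max_right _ _)
    | exfalso; linarith

theorem integral_sub_mul_min_sub_mul_nonpos {lam f w : ℝ → ℝ} {α β : ℝ} (hαβ : α ≤ β)
    (hlam : MonotoneOn lam (Icc α β)) (hf : ContinuousOn f (Icc α β))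
    (hw : ContinuousOn w (Icc α β)) (hw0 : ∀ t ∈ Icc α β, 0 ≤ w t)
    (htan : ∀ t ∈ Icc α β, 0 ≤ ∫ u in β..t, (f u - f β) * w u) :
    ∫ t in α..β, (lam t - f t) * (min (lam t) (f β) - lam t) * w t ≤ 0 := by
  have hα : α ∈ Icc α β := left_mem_Icc.2 hαβ
  have hβ : β ∈ Icc α β := right_mem_Icc.2 hαβ
  set ψ := fun t => max (lam t - f β) 0
  have hψ : MonotoneOn ψ (Icc α β) := fun a ha b hb hab =>
    max_le_max_right _ (sub_le_sub_right (hlam ha hb hab) _)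
  have hlamL := hlam.memLp_isCompact (μ := volume) (p := ∞) isCompact_Icc
  have hfL := hf.memLp_top_of_isCompact (μ := volume) isCompact_Icc
  have hwL := hw.memLp_top_of_isCompact (μ := volume) isCompact_Icc
  have hρ : MemLp (fun u => (f β - f u) * w u) ∞ (volume.restrict (Icc α β)) :=
    hwL.mul' (r := ∞) ((memLp_top_const _).sub hfL)
  have hcap : MonotoneOn (fun t => min (lam t) (f β)) (Icc α β) := fun a ha b hb hab =>
    min_le_min_right _ (hlam ha hb hab)
  have hQ := hlamL.sub_mul_sub_mul (hcap.memLp_isCompact isCompact_Icc) hfL hwL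
  have hψρ : IntervalIntegrable (fun t => ψ t * ((f β - f t) * w t)) volume α β :=
    (hρ.mul' (r := ∞) (hψ.memLp_isCompact (p := ∞) isCompact_Icc)).intervalIntegrable_of_mem_Icc
      hα hβ
  have hlayer : 0 ≤ ∫ u in α..β, ψ u * ((f β - f u) * w u) :=
    integral_mul_nonneg_of_monotoneOn hαβ (hρ.intervalIntegrable_of_mem_Icc hα hβ) hψ
      (fun _ _ => le_max_right _ _) fun t ht => by
        rw [intervalIntegral.integral_symm, ← intervalIntegral.integral_neg]
        simpa only [← neg_mul, neg_sub] using htan t ht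
  calc ∫ t in α..β, (lam t - f t) * (min (lam t) (f β) - lam t) * w t
      ≤ ∫ t in α..β, -(ψ t * ((f β - f t) * w t)) := by
        refine intervalIntegral.integral_mono_on hαβ (hQ.intervalIntegrable_of_mem_Icc hα hβ)
          hψρ.neg fun t ht => ?_
        -- `(lam - f) (min lam c - lam) = -ψ (lam - c) - ψ (c - f)`, and `ψ (lam - c) = ψ² ≥ 0`
        have hwt := hw0 t ht
        rcases le_total (lam t) (f β) with h | h
        · simp [ψ, min_eq_left h, max_eq_right (sub_nonpos.2 h)]
        · simp only [ψ, min_eq_right h, max_eq_left (sub_nonneg.2 h)]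
          nlinarith [mul_nonneg (sq_nonneg (lam t - f β)) hwt]
    _ ≤ 0 := by rw [intervalIntegral.integral_neg]; exact neg_nonpos.2 hlayer

theorem integral_sub_mul_max_sub_mul_nonpos {lam f w : ℝ → ℝ} {α β : ℝ} (hαβ : α ≤ β)
    (hlam : MonotoneOn lam (Icc α β)) (hf : ContinuousOn f (Icc α β))
    (hw : ContinuousOn w (Icc α β)) (hw0 : ∀ t ∈ Icc α β, 0 ≤ w t)
    (htan : ∀ t ∈ Icc α β, 0 ≤ ∫ u in α..t, (f u - f α) * w u) :
    ∫ t in α..β, (lam t - f t) * (max (lam t) (f α) - lam t) * w t ≤ 0 := by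
  have hα : α ∈ Icc α β := left_mem_Icc.2 hαβ
  have hβ : β ∈ Icc α β := right_mem_Icc.2 hαβ
  set ψ := fun t => max (f α - lam t) 0
  have hψ : AntitoneOn ψ (Icc α β) := fun a ha b hb hab =>
    max_le_max_right _ (sub_le_sub_left (hlam ha hb hab) _)
  have hlamL := hlam.memLp_isCompact (μ := volume) (p := ∞) isCompact_Icc
  have hfL := hf.memLp_top_of_isCompact (μ := volume) isCompact_Icc
  have hwL := hw.memLp_top_of_isCompact (μ := volume) isCompact_Icc
  have hρ : MemLp (fun u => (f u - f α) * w u) ∞ (volume.restrict (Icc α β)) :=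
    hwL.mul' (r := ∞) (hfL.sub (memLp_top_const _))
  have hcup : MonotoneOn (fun t => max (lam t) (f α)) (Icc α β) := fun a ha b hb hab =>
    max_le_max_right _ (hlam ha hb hab)
  have hQ := hlamL.sub_mul_sub_mul (hcup.memLp_isCompact isCompact_Icc) hfL hwL
  have hψρ : IntervalIntegrable (fun t => ψ t * ((f t - f α) * w t)) volume α β :=
    (hρ.mul' (r := ∞) (hψ.memLp_isCompact (p := ∞) isCompact_Icc)).intervalIntegrable_of_mem_Icc
      hα hβ
  have hlayer : 0 ≤ ∫ u in α..β, ψ u * ((f u - f α) * w u) :=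
    integral_mul_nonneg_of_antitoneOn hαβ (hρ.intervalIntegrable_of_mem_Icc hα hβ) hψ
      (fun _ _ => le_max_right _ _) htan
  calc ∫ t in α..β, (lam t - f t) * (max (lam t) (f α) - lam t) * w t
      ≤ ∫ t in α..β, -(ψ t * ((f t - f α) * w t)) := by
        refine intervalIntegral.integral_mono_on hαβ (hQ.intervalIntegrable_of_mem_Icc hα hβ)
          hψρ.neg fun t ht => ?_
        have hwt := hw0 t ht
        rcases le_total (lam t) (f α) with h | h
        · simp only [ψ, max_eq_right h, max_eq_left (sub_nonneg.2 h)]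
          nlinarith [mul_nonneg (sq_nonneg (lam t - f α)) hwt]
        · simp [ψ, max_eq_left h, max_eq_right (sub_nonpos.2 h)]
    _ ≤ 0 := by rw [intervalIntegral.integral_neg]; exact neg_nonpos.2 hlayer

theorem integral_sub_mul_splice_sub_mul_le {lam f w : ℝ → ℝ} {a b l M : ℝ}
    (hal : a ≤ l) (hlM : l ≤ M) (hMb : M ≤ b) (hlam : MonotoneOn lam (Icc a b))
    (hfmono : MonotoneOn f (Icc l M)) (hf : ContinuousOn f (Icc a b))
    (hw : ContinuousOn w (Icc a b)) (hw0 : ∀ t ∈ Icc a b, 0 ≤ w t)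
    (htanl : ∀ t ∈ Icc a l, 0 ≤ ∫ u in l..t, (f u - f l) * w u)
    (htanr : ∀ t ∈ Icc M b, 0 ≤ ∫ u in M..t, (f u - f M) * w u) :
    ∫ t in a..b, (lam t - f t) * (splice lam f l M t - lam t) * w t ≤
      -∫ t in l..M, (lam t - f t) ^ 2 * w t := by
  have ha : a ∈ Icc a b := ⟨le_rfl, hal.trans (hlM.trans hMb)⟩
  have hl : l ∈ Icc a b := ⟨hal, hlM.trans hMb⟩
  have hM : M ∈ Icc a b := ⟨hal.trans hlM, hMb⟩
  have hb : b ∈ Icc a b := ⟨hal.trans (hlM.trans hMb), le_rfl⟩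
  have hQ := (hlam.memLp_isCompact (μ := volume) (p := ∞) isCompact_Icc).sub_mul_sub_mul
    ((monotoneOn_splice hlam hfmono hlM).memLp_isCompact isCompact_Icc)
    (hf.memLp_top_of_isCompact isCompact_Icc) (hw.memLp_top_of_isCompact isCompact_Icc)
  rw [← intervalIntegral.integral_add_adjacent_intervals (hQ.intervalIntegrable_of_mem_Icc ha hM)
      (hQ.intervalIntegrable_of_mem_Icc hM hb),
    ← intervalIntegral.integral_add_adjacent_intervals (hQ.intervalIntegrable_of_mem_Icc ha hl)
      (hQ.intervalIntegrable_of_mem_Icc hl hM)]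
  have hleft : ∫ t in a..l, (lam t - f t) * (splice lam f l M t - lam t) * w t ≤ 0 := by
    have hsub : Icc a l ⊆ Icc a b := Icc_subset_Icc_right (hlM.trans hMb)
    refine (intervalIntegral.integral_congr fun t ht => ?_).trans_le
      (integral_sub_mul_min_sub_mul_nonpos hal (hlam.mono hsub) (hf.mono hsub) (hw.mono hsub)
        (fun t ht => hw0 t (hsub ht)) htanl)
    rw [uIcc_of_le hal] at ht
    simp only [splice, if_pos ht.2]
  have hmid : ∫ t in l..M, (lam t - f t) * (splice lam f l M t - lam t) * w t =
      -∫ t in l..M, (lam t - f t) ^ 2 * w t := by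
    rw [← intervalIntegral.integral_neg]
    refine intervalIntegral.integral_congr_ae (ae_of_all _ fun t ht => ?_)
    rw [uIoc_of_le hlM] at ht
    simp only [splice, if_neg (not_le.2 ht.1), if_pos ht.2]
    ring
  have hright : ∫ t in M..b, (lam t - f t) * (splice lam f l M t - lam t) * w t ≤ 0 := by
    have hsub : Icc M b ⊆ Icc a b := Icc_subset_Icc_left (hal.trans hlM)
    refine (intervalIntegral.integral_congr_ae (ae_of_all _ fun t ht => ?_)).trans_le
      (integral_sub_mul_max_sub_mul_nonpos hMb (hlam.mono hsub) (hf.mono hsub) (hw.mono hsub)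
        (fun t ht => hw0 t (hsub ht)) htanr)
    rw [uIoc_of_le hMb] at ht
    simp only [splice, if_neg (not_le.2 (hlM.trans_lt ht.1)), if_neg (not_le.2 ht.1)]
  linarith

theorem nonneg_of_forall_mem_Ioc_nonneg_add_mul {J K : ℝ}
    (h : ∀ ε ∈ Ioc (0 : ℝ) 1, 0 ≤ J + ε * K) : 0 ≤ J := by
  have hcont : Continuous fun ε : ℝ => J + ε * K := by fun_prop
  have hlim : Tendsto (fun ε => J + ε * K) (𝓝[>] 0) (𝓝 J) := by
    simpa using (hcont.tendsto 0).mono_left nhdsWithin_le_nhds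
  exact ge_of_tendsto hlim (mem_of_superset (Ioc_mem_nhdsGT one_pos) h)

theorem integral_sub_mul_sub_mul_nonneg_of_forall_monotoneOn {lam g f w : ℝ → ℝ} {a b : ℝ}
    (hab : a ≤ b) (hlam : MonotoneOn lam (Icc a b)) (hg : MonotoneOn g (Icc a b))
    (hf : ContinuousOn f (Icc a b)) (hw : ContinuousOn w (Icc a b))
    (hmin : ∀ h : ℝ → ℝ, MonotoneOn h (Icc a b) →
      ∫ x in a..b, (lam x - f x) ^ 2 * w x ≤ ∫ x in a..b, (h x - f x) ^ 2 * w x) :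
    0 ≤ ∫ x in a..b, (lam x - f x) * (g x - lam x) * w x := by
  have ha : a ∈ Icc a b := left_mem_Icc.2 hab
  have hb : b ∈ Icc a b := right_mem_Icc.2 hab
  have hlamL := hlam.memLp_isCompact (μ := volume) (p := ∞) isCompact_Icc
  have hgL := hg.memLp_isCompact (μ := volume) (p := ∞) isCompact_Icc
  have hfL := hf.memLp_top_of_isCompact (μ := volume) isCompact_Icc
  have hwL := hw.memLp_top_of_isCompact (μ := volume) isCompact_Icc
  have hP := (hlamL.sub_sq_mul hfL hwL).intervalIntegrable_of_mem_Icc ha hb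
  have hQ := (hlamL.sub_mul_sub_mul hgL hfL hwL).intervalIntegrable_of_mem_Icc ha hb
  have hR := (hgL.sub_sq_mul hlamL hwL).intervalIntegrable_of_mem_Icc ha hb
  refine nonneg_of_mul_nonneg_right ?_ two_pos
  refine nonneg_of_forall_mem_Ioc_nonneg_add_mul (K := ∫ x in a..b, (g x - lam x) ^ 2 * w x)
    fun ε hε => ?_
  have hmono : MonotoneOn (fun x => lam x + ε * (g x - lam x)) (Icc a b) :=
    fun x hx y hy hxy => by nlinarith [hlam hx hy hxy, hg hx hy hxy, hε.1, hε.2]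
  have hexpand : ∫ x in a..b, (lam x + ε * (g x - lam x) - f x) ^ 2 * w x =
      (∫ x in a..b, (lam x - f x) ^ 2 * w x) +
        ε * (2 * (∫ x in a..b, (lam x - f x) * (g x - lam x) * w x) +
          ε * ∫ x in a..b, (g x - lam x) ^ 2 * w x) := by
    rw [← intervalIntegral.integral_const_mul, ← intervalIntegral.integral_const_mul,
      ← intervalIntegral.integral_add (hQ.const_mul _) (hR.const_mul _),
      ← intervalIntegral.integral_const_mul, ← intervalIntegral.integral_add hP
        ((hQ.const_mul _).add (hR.const_mul _) |>.const_mul _)]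
    exact intervalIntegral.integral_congr fun x _ => by ring
  have := hmin _ hmono
  rw [hexpand] at this
  exact nonneg_of_mul_nonneg_right (by linarith) hε.1

theorem ae_restrict_Icc_eq_of_integral_sub_sq_mul_nonpos {φ f w : ℝ → ℝ} {a b : ℝ}
    (hab : a ≤ b) (hint : IntervalIntegrable (fun t => (φ t - f t) ^ 2 * w t) volume a b)
    (hw : ∀ t ∈ Icc a b, 0 < w t) (h : ∫ t in a..b, (φ t - f t) ^ 2 * w t ≤ 0) :
    ∀ᵐ t ∂volume.restrict (Icc a b), φ t = f t := by
  have hnn : ∀ t ∈ Icc a b, 0 ≤ (φ t - f t) ^ 2 * w t := fun t ht =>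
    mul_nonneg (sq_nonneg _) (hw t ht).le
  have h0 := le_antisymm h (intervalIntegral.integral_nonneg hab hnn)
  rw [intervalIntegral.integral_of_le hab, integral_eq_zero_iff_of_nonneg_ae
    (ae_restrict_of_forall_mem measurableSet_Ioc fun t ht => hnn t (Ioc_subset_Icc_self ht))
    hint.1] at h0
  rw [← Measure.restrict_congr_set Ioc_ae_eq_Icc]
  filter_upwards [h0, ae_restrict_mem measurableSet_Ioc] with t ht hmem
  simpa [(hw t (Ioc_subset_Icc_self hmem)).ne', sub_eq_zero] using ht

theorem stmt19 (τ l M : ℝ) (f w lamh : ℝ → ℝ)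
    (h0l : 0 ≤ l) (hlM : l ≤ M) (hMτ : M ≤ τ)
    (hf : ContinuousOn f (Set.Icc 0 τ)) (hw : ContinuousOn w (Set.Icc 0 τ))
    (hwpos : ∀ x ∈ Set.Icc (0:ℝ) τ, 0 < w x)
    (hfmono : MonotoneOn f (Set.Icc l M))
    (htan1 : ∀ t ∈ Set.Icc (0:ℝ) l,
      (∫ u in (0:ℝ)..l, f u * w u) +
        ((∫ u in (0:ℝ)..t, w u) - ∫ u in (0:ℝ)..l, w u) * f l ≤
        ∫ u in (0:ℝ)..t, f u * w u)
    (htan2 : ∀ t ∈ Set.Icc M τ,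
      (∫ u in (0:ℝ)..M, f u * w u) +
        ((∫ u in (0:ℝ)..t, w u) - ∫ u in (0:ℝ)..M, w u) * f M ≤
        ∫ u in (0:ℝ)..t, f u * w u)
    (hmono : MonotoneOn lamh (Set.Icc 0 τ))
    (hmin : ∀ g : ℝ → ℝ, MonotoneOn g (Set.Icc 0 τ) →
      (∫ x in (0:ℝ)..τ, (lamh x - f x) ^ 2 * w x) ≤
        ∫ x in (0:ℝ)..τ, (g x - f x) ^ 2 * w x) :
    ∀ᵐ t ∂(volume.restrict (Set.Icc l M)), lamh t = f t := by
  have hl : l ∈ Icc 0 τ := ⟨h0l, hlM.trans hMτ⟩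
  have hM : M ∈ Icc 0 τ := ⟨h0l.trans hlM, hMτ⟩
  have hvar := integral_sub_mul_sub_mul_nonneg_of_forall_monotoneOn (hl.1.trans hl.2) hmono
    (monotoneOn_splice hmono hfmono hlM) hf hw hmin
  have hsplice := integral_sub_mul_splice_sub_mul_le h0l hlM hMτ hmono hfmono hf hw
    (fun t ht => (hwpos t ht).le)
    (fun t ht => integral_sub_mul_nonneg_of_tangent_le hf hw hl ⟨ht.1, ht.2.trans hl.2⟩
      (htan1 t ht))
    (fun t ht => integral_sub_mul_nonneg_of_tangent_le hf hw hM ⟨hM.1.trans ht.1, ht.2⟩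
      (htan2 t ht))
  have hP := ((hmono.memLp_isCompact (μ := volume) (p := ∞) isCompact_Icc).sub_sq_mul
    (hf.memLp_top_of_isCompact isCompact_Icc)
    (hw.memLp_top_of_isCompact isCompact_Icc)).intervalIntegrable_of_mem_Icc hl hM
  exact ae_restrict_Icc_eq_of_integral_sub_sq_mul_nonpos hlM hP
    (fun t ht => hwpos t ⟨h0l.trans ht.1, ht.2.trans hMτ⟩) (by linarith)
end
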